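/- Let N ≥ 1 and let X : {0,1,2,3}^N → ℝ be a tensor invariant under every permutation of its N indices. Then the following are equivalent: (i) there exist an integer r, weights w₁, …, w_r ≥ 0, and vectors n^{(j)} = (n^{(j)}₀, n^{(j)}₁, n^{(j)}₂, n^{(j)}₃) ∈ ℝ⁴ with n^{(j)}₀ = 1 and (n^{(j)}₁)² + (n^{(j)}₂)² + (n^{(j)}₃)² = 1 such that X_{μ₁…μ_N} = Σ_{j=1}^r w_j n^{(j)}_{μ₁} ⋯ n^{(j)}_{μ_N} for all indices μ₁, …, μ_N ∈ {0,1,2,3}; (ii) there exists a finite positive Borel measure μ supported on the unit sphere S² = {x ∈ ℝ³ : x₁²+x₂²+x₃² = 1} such that X_{μ₁…μ_N} = ∫ x_{μ₁} x_{μ₂} ⋯ x_{μ_N} dμ(x) for all indices, where by convention x₀ := 1. -/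

import Mathlib

/-!
Weighted Dirac masses at the Bloch vectors turn (i) into (ii). Conversely, put
`v(x) = (∏ᵢ x_{μᵢ})_{μ₁…μ_N}`. The tensor `∫ v dμ` is `μ(ℝ³)` times the average of `v`, which
lies in the closure of the convex hull of `v(S²)`. Since `v(S²)` is compact and the tensors form
a finite-dimensional space, Carathéodory's theorem makes this convex hull compact, hence closed, so
the average is a finite convex combination of tensors `v(n_j)` with `n_j ∈ S²`.
-/

open MeasureTheory

noncomputable section

/-- The extension of `x ∈ ℝ³` to `ℝ⁴` by the convention `x₀ := 1`. -/
def ext1 (x : Fin 3 → ℝ) : Fin 4 → ℝ := ![1, x 0, x 1, x 2]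

def measureSupport (μ : Measure (Fin 3 → ℝ)) : Set (Fin 3 → ℝ) :=
  {x | ∀ U : Set (Fin 3 → ℝ), IsOpen U → x ∈ U → μ U ≠ 0}

section ConvexHull

variable {E : Type*}

def convexCombinations [AddCommGroup E] [Module ℝ E] (K : Set E) (m : ℕ) : Set E :=
  (fun p : (Fin m → ℝ) × (Fin m → E) => ∑ i, p.1 i • p.2 i) ''
    (stdSimplex ℝ (Fin m) ×ˢ Set.univ.pi fun _ => K)

theorem convexCombinations_subset_convexHull [AddCommGroup E] [Module ℝ E] (K : Set E) (m : ℕ) :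
    convexCombinations K m ⊆ convexHull ℝ K := by
  rintro _ ⟨⟨w, z⟩, ⟨⟨hw₀, hw₁⟩, hz⟩, rfl⟩
  exact (convex_convexHull ℝ K).sum_mem (fun i _ => hw₀ i) hw₁
    fun i _ => subset_convexHull ℝ K (hz i trivial)

theorem convexHull_subset_iUnion_convexCombinations [AddCommGroup E] [Module ℝ E]
    [FiniteDimensional ℝ E] (K : Set E) :
    convexHull ℝ K ⊆ ⋃ m ≤ Module.finrank ℝ E + 1, convexCombinations K m := by
  intro x hx
  obtain ⟨ι, _, z, w, hzK, hz, hw₀, hw₁, rfl⟩ := eq_pos_convex_span_of_mem_convexHull hx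
  let e := Fintype.equivFin ι
  refine Set.mem_biUnion (x := Fintype.card ι) ?_
    ⟨(w ∘ e.symm, z ∘ e.symm), ⟨⟨fun i => (hw₀ _).le, ?_⟩, fun i _ => hzK ⟨_, rfl⟩⟩, ?_⟩
  · have := hz.card_le_finrank_succ
    have := Submodule.finrank_le (vectorSpan ℝ (Set.range z))
    change Fintype.card ι ≤ _
    omega
  · rwa [← e.symm.sum_comp] at hw₁
  · exact e.symm.sum_comp fun i => w i • z i

theorem convexHull_eq_iUnion_convexCombinations [AddCommGroup E] [Module ℝ E]
    [FiniteDimensional ℝ E] (K : Set E) :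
    convexHull ℝ K = ⋃ m ≤ Module.finrank ℝ E + 1, convexCombinations K m :=
  (convexHull_subset_iUnion_convexCombinations K).antisymm <|
    Set.iUnion₂_subset fun m _ => convexCombinations_subset_convexHull K m

variable [NormedAddCommGroup E] [NormedSpace ℝ E]

theorem IsCompact.convexCombinations {K : Set E} (hK : IsCompact K) (m : ℕ) :
    IsCompact (convexCombinations K m) :=
  ((isCompact_stdSimplex ℝ _).prod (isCompact_univ_pi fun _ => hK)).image (by fun_prop)

theorem IsCompact.convexHull [FiniteDimensional ℝ E] {K : Set E} (hK : IsCompact K) :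
    IsCompact (convexHull ℝ K) := by
  rw [convexHull_eq_iUnion_convexCombinations]
  exact (Set.finite_le_nat _).isCompact_biUnion fun m _ => hK.convexCombinations m

end ConvexHull

section Integral

variable {α E : Type*} [MeasurableSpace α] [NormedAddCommGroup E]

theorem MeasureTheory.Integrable.of_ae_mem_isCompact {μ : Measure α} [IsFiniteMeasure μ]
    {f : α → E} {K : Set E} (hK : IsCompact K) (hf : AEStronglyMeasurable f μ) (hfK : ∀ᵐ x ∂μ, f x ∈ K) :
    Integrable f μ :=
  let ⟨C, hC⟩ := hK.isBounded.exists_norm_le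
  .of_bound hf C (hfK.mono fun _ hx => hC _ hx)

variable [NormedSpace ℝ E]

theorem exists_integral_eq_sum_smul_of_ae_mem [FiniteDimensional ℝ E] {μ : Measure α}
    [IsFiniteMeasure μ] {f : α → E} {K : Set E} (hK : IsCompact K) (hf : Integrable f μ)
    (hfK : ∀ᵐ x ∂μ, f x ∈ K) :
    ∃ (r : ℕ) (w : Fin r → ℝ) (z : Fin r → E),
      (∀ j, 0 ≤ w j) ∧ (∀ j, z j ∈ K) ∧ ∫ x, f x ∂μ = ∑ j, w j • z j := by
  rcases eq_zero_or_neZero μ with rfl | _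
  · exact ⟨0, Fin.elim0, Fin.elim0, Fin.rec0, Fin.rec0, by simp⟩
  have havg : ⨍ x, f x ∂μ ∈ convexHull ℝ K :=
    (convex_convexHull ℝ K).average_mem hK.convexHull.isClosed
      (hfK.mono fun x hx => subset_convexHull ℝ K hx) hf
  obtain ⟨m, -, ⟨w, z⟩, ⟨⟨hw₀, -⟩, hz⟩, hwz⟩ :=
    Set.mem_iUnion₂.1 (convexHull_subset_iUnion_convexCombinations K havg)
  refine ⟨m, fun j => μ.real Set.univ * w j, z, fun j => mul_nonneg measureReal_nonneg (hw₀ j),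
    fun j => hz j trivial, ?_⟩
  rw [← measure_smul_average, ← hwz, Finset.smul_sum]
  simp only [mul_smul]

theorem integral_finset_sum_smul_dirac [MeasurableSingletonClass α] [CompleteSpace E]
    {ι : Type*} (s : Finset ι) (w : ι → NNReal) (p : ι → α) (f : α → E) :
    ∫ x, f x ∂(∑ j ∈ s, w j • Measure.dirac (p j)) = ∑ j ∈ s, (w j : ℝ) • f (p j) := by
  rw [integral_finsetSum_measure fun j _ =>
    (integrable_dirac (by simp)).smul_measure_nnreal]
  simp [integral_dirac, NNReal.smul_def]

end Integral

section MeasureSupport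

variable {μ : Measure (Fin 3 → ℝ)} {S : Set (Fin 3 → ℝ)}

theorem measureSupport_eq_support : measureSupport μ = μ.support := by
  simp [Measure.support_eq_forall_isOpen, measureSupport, pos_iff_ne_zero, imp.swap]

theorem ae_mem_of_measureSupport_subset (h : measureSupport μ ⊆ S) : ∀ᵐ x ∂μ, x ∈ S :=
  measure_mono_null (Set.compl_subset_compl.2 (measureSupport_eq_support ▸ h))
    Measure.measure_compl_support

theorem measureSupport_subset_of_ae_mem (hS : IsClosed S) (h : ∀ᵐ x ∂μ, x ∈ S) :
    measureSupport μ ⊆ S :=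
  measureSupport_eq_support ▸ Measure.support_subset_of_isClosed hS h

end MeasureSupport

def blochSphere : Set (Fin 3 → ℝ) := {x | x 0 ^ 2 + x 1 ^ 2 + x 2 ^ 2 = 1}

theorem isClosed_blochSphere : IsClosed blochSphere :=
  isClosed_eq (by fun_prop) continuous_const

theorem abs_le_one_of_mem_blochSphere {x : Fin 3 → ℝ} (hx : x ∈ blochSphere) (i : Fin 3) :
    |x i| ≤ 1 := by
  have : x 0 ^ 2 + x 1 ^ 2 + x 2 ^ 2 = 1 := hx
  rw [← sq_le_one_iff_abs_le_one]
  fin_cases i <;> simp only [Fin.zero_eta, Fin.mk_one, Fin.reduceFinMk] <;>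
    nlinarith [sq_nonneg (x 0), sq_nonneg (x 1), sq_nonneg (x 2)]

theorem isCompact_blochSphere : IsCompact blochSphere :=
  Metric.isCompact_of_isClosed_isBounded isClosed_blochSphere <|
    (Metric.isBounded_closedBall (x := 0) (r := 1)).subset fun x hx => by
      simpa [pi_norm_le_iff_of_nonneg] using abs_le_one_of_mem_blochSphere hx

theorem ext1_eq_of_apply_zero {v : Fin 4 → ℝ} (hv : v 0 = 1) : ext1 ![v 1, v 2, v 3] = v := by
  ext k
  fin_cases k <;> simp [ext1, hv]

theorem continuous_ext1_apply (k : Fin 4) : Continuous fun x => ext1 x k := by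
  fin_cases k <;> simp only [ext1] <;> fun_prop

def momentVector (N : ℕ) (x : Fin 3 → ℝ) : (Fin N → Fin 4) → ℝ :=
  fun μs => ∏ i, ext1 x (μs i)

theorem continuous_momentVector (N : ℕ) : Continuous (momentVector N) :=
  continuous_pi fun μs => continuous_finsetProd _ fun i _ => continuous_ext1_apply (μs i)

theorem separable_iff_representing_measure_on_sphere_general (N : ℕ)
    (X : (Fin N → Fin 4) → ℝ) :
    (∃ (r : ℕ) (w : Fin r → ℝ) (nv : Fin r → Fin 4 → ℝ),
        (∀ j, 0 ≤ w j) ∧ (∀ j, nv j 0 = 1) ∧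
        (∀ j, (nv j 1) ^ 2 + (nv j 2) ^ 2 + (nv j 3) ^ 2 = 1) ∧
        ∀ μs : Fin N → Fin 4, X μs = ∑ j, w j * ∏ i, nv j (μs i))
    ↔ (∃ μ : Measure (Fin 3 → ℝ), IsFiniteMeasure μ ∧
        measureSupport μ ⊆ {x | x 0 ^ 2 + x 1 ^ 2 + x 2 ^ 2 = 1} ∧
        ∀ μs : Fin N → Fin 4, X μs = ∫ x, ∏ i, ext1 x (μs i) ∂μ) := by
  constructor
  · rintro ⟨r, w, nv, hw, h0, hunit, hX⟩
    let p j : Fin 3 → ℝ := ![nv j 1, nv j 2, nv j 3]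
    have hp : ∀ j, p j ∈ blochSphere := hunit
    refine ⟨∑ j, (w j).toNNReal • Measure.dirac (p j), inferInstance, ?_, fun μs => ?_⟩
    · refine measureSupport_subset_of_ae_mem isClosed_blochSphere (mem_ae_iff.2 ?_)
      simpa [blochSphere] using fun j => Or.inr (hp j)
    · rw [hX, integral_finset_sum_smul_dirac]
      simp [Real.coe_toNNReal _ (hw _), p, ext1_eq_of_apply_zero (h0 _)]
  · rintro ⟨μ, _, hsupp, hX⟩
    have hmem : ∀ᵐ x ∂μ, momentVector N x ∈ momentVector N '' blochSphere :=
      (ae_mem_of_measureSupport_subset hsupp).mono fun x hx => Set.mem_image_of_mem _ hx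
    have hK := isCompact_blochSphere.image (continuous_momentVector N)
    have hint := Integrable.of_ae_mem_isCompact hK
      (continuous_momentVector N).aestronglyMeasurable hmem
    obtain ⟨r, w, z, hw, hz, hsum⟩ := exists_integral_eq_sum_smul_of_ae_mem hK hint hmem
    choose y hy hyz using hz
    refine ⟨r, w, fun j => ext1 (y j), hw, fun j => rfl, hy, fun μs => ?_⟩
    rw [hX]
    change ∫ x, momentVector N x μs ∂μ = _
    rw [← eval_integral hint.eval, hsum]
    simp [← hyz, momentVector]

/-- for a permutation-invariant tensor `X : {0,1,2,3}^N → ℝ`, the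
following are equivalent: (i) `X` is a nonnegative combination of symmetric products
`n^{(j)}_{μ₁} ⋯ n^{(j)}_{μ_N}` with `n^{(j)}₀ = 1` and unit Bloch vectors; (ii) there
is a finite positive Borel measure `μ` supported on the unit sphere `S² ⊂ ℝ³` with
`X_{μ₁…μ_N} = ∫ x_{μ₁} ⋯ x_{μ_N} dμ(x)` (with the convention `x₀ := 1`). -/
theorem separable_iff_representing_measure_on_sphere (N : ℕ) (hN : 1 ≤ N)
    (X : (Fin N → Fin 4) → ℝ)
    (hsym : ∀ (π : Equiv.Perm (Fin N)) (μs : Fin N → Fin 4), X (μs ∘ π) = X μs) :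
    (∃ (r : ℕ) (w : Fin r → ℝ) (nv : Fin r → Fin 4 → ℝ),
        (∀ j, 0 ≤ w j) ∧ (∀ j, nv j 0 = 1) ∧
        (∀ j, (nv j 1) ^ 2 + (nv j 2) ^ 2 + (nv j 3) ^ 2 = 1) ∧
        ∀ μs : Fin N → Fin 4, X μs = ∑ j, w j * ∏ i, nv j (μs i))
    ↔ (∃ μ : Measure (Fin 3 → ℝ), IsFiniteMeasure μ ∧
        measureSupport μ ⊆ {x | x 0 ^ 2 + x 1 ^ 2 + x 2 ^ 2 = 1} ∧
        ∀ μs : Fin N → Fin 4, X μs = ∫ x, ∏ i, ext1 x (μs i) ∂μ) :=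
  separable_iff_representing_measure_on_sphere_general N X
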